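/- arXiv:1707.02344 — 2 statements merged into one kernel-verified Lean document; each statement's English description precedes it below -/
import Mathlib

section
/- Let (S, c) be a coalgebra c : S → ((P_c S)+1)^L on convex algebras with c a convex homomorphism, and let ≈ denote bisimilarity of the underlying labeled transition system (x →_a y iff y ∈ c(x)(a), with c(x)(a)=* meaning no a-transitions). Then ≈ is a convex congruence: if ζ₁ ≈ ζ₂ and ξ₁ ≈ ξ₂ then p ζ₁ + (1-p) ξ₁ ≈ p ζ₂ + (1-p) ξ₂ for all p ∈ [0,1]. -/
/-- A convex algebra presented by its binary convex combinations `comb p x y = p·x + (1-p)·y`,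
satisfying idempotence, parametric commutativity and parametric associativity on `(0,1)`,
together with the projection rule at the boundary (`comb 1 x y = x`, `comb 0 x y = y`). -/
structure ConvexAlg (A : Type*) where
  comb : ℝ → A → A → A
  idem : ∀ p : ℝ, 0 < p → p < 1 → ∀ x, comb p x x = x
  comm : ∀ p : ℝ, 0 < p → p < 1 → ∀ x y, comb p x y = comb (1 - p) y x
  assoc : ∀ p q : ℝ, 0 < p → p < 1 → 0 < q → q < 1 → ∀ x y z,
    comb p (comb q x y) z = comb (p * q) x (comb (p * (1 - q) / (1 - p * q)) y z)
  comb_one : ∀ x y, comb 1 x y = x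
  comb_zero : ∀ x y, comb 0 x y = y

variable {S L : Type*}

/-- Pointwise convex combination of subsets. -/
def setComb (𝒜 : ConvexAlg S) (p : ℝ) (C D : Set S) : Set S :=
  {z | ∃ c ∈ C, ∃ d ∈ D, z = 𝒜.comb p c d}

/-- The convex combination on `P_c(S) + 1` (black-hole extension, `* = none`). -/
def obComb (𝒜 : ConvexAlg S) (p : ℝ) : Option (Set S) → Option (Set S) → Option (Set S)
  | some C, some D => some (setComb 𝒜 p C D)
  | _, _ => none

/-- The labeled transition relation of the coalgebra `c`:
`x →_a y` iff `c x a ≠ *` and `y ∈ c x a`. -/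
def Tr (c : S → L → Option (Set S)) (x : S) (a : L) (y : S) : Prop :=
  ∃ C, c x a = some C ∧ y ∈ C

/-- `R` is a bisimulation: related states match each other's labeled transitions
with `R`-related successors. -/
def IsBisim (T : S → L → S → Prop) (R : S → S → Prop) : Prop :=
  ∀ x y, R x y → ∀ a,
    (∀ x', T x a x' → ∃ y', T y a y' ∧ R x' y') ∧
    (∀ y', T y a y' → ∃ x', T x a x' ∧ R x' y')

/-- Bisimilarity: the greatest bisimulation. -/
def Bisimilar (T : S → L → S → Prop) (x y : S) : Prop :=
  ∃ R, IsBisim T R ∧ R x y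


lemma bisim_isBisim {T : S → L → S → Prop} : IsBisim T (Bisimilar T) := by
  rintro x y ⟨R, hR, hxy⟩ a
  constructor
  · intro x' hx'
    obtain ⟨y', hy', hR'⟩ := (hR x y hxy a).1 x' hx'
    exact ⟨y', hy', R, hR, hR'⟩
  · intro y' hy'
    obtain ⟨x', hx', hR'⟩ := (hR x y hxy a).2 y' hy'
    exact ⟨x', hx', R, hR, hR'⟩

lemma tr_comb {𝒜 : ConvexAlg S} {c : S → L → Option (Set S)}
    (hhom : ∀ p : ℝ, 0 < p → p < 1 → ∀ (x₁ x₂ : S) (a : L),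
      c (𝒜.comb p x₁ x₂) a = obComb 𝒜 p (c x₁ a) (c x₂ a))
    {p : ℝ} (hp0 : 0 < p) (hp1 : p < 1) (x₁ x₂ : S) (a : L) (z : S) :
    Tr c (𝒜.comb p x₁ x₂) a z ↔
      ∃ z₁ z₂, Tr c x₁ a z₁ ∧ Tr c x₂ a z₂ ∧ z = 𝒜.comb p z₁ z₂ := by
  constructor
  · rintro ⟨C, hC, hz⟩
    rw [hhom p hp0 hp1] at hC
    rcases h1 : c x₁ a with _ | C₁ <;> rcases h2 : c x₂ a with _ | C₂ <;>
      rw [h1, h2] at hC <;> simp [obComb] at hC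
    subst hC
    obtain ⟨z₁, hz₁, z₂, hz₂, hzz⟩ := hz
    exact ⟨z₁, z₂, ⟨C₁, h1, hz₁⟩, ⟨C₂, h2, hz₂⟩, hzz⟩
  · rintro ⟨z₁, z₂, ⟨C₁, h1, hz₁⟩, ⟨C₂, h2, hz₂⟩, rfl⟩
    refine ⟨setComb 𝒜 p C₁ C₂, ?_, z₁, hz₁, z₂, hz₂, rfl⟩
    rw [hhom p hp0 hp1, h1, h2]; rfl

/-- For a coalgebra `c : S → ((P_c S)+1)^L` on a convex algebra with `c` a convex
homomorphism, bisimilarity of the underlying LTS is a convex congruence. -/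
theorem stmt14 (𝒜 : ConvexAlg S) (c : S → L → Option (Set S))
    (hhom : ∀ p : ℝ, 0 < p → p < 1 → ∀ (x₁ x₂ : S) (a : L),
      c (𝒜.comb p x₁ x₂) a = obComb 𝒜 p (c x₁ a) (c x₂ a))
    {p : ℝ} (hp0 : 0 ≤ p) (hp1 : p ≤ 1) {ζ₁ ζ₂ ξ₁ ξ₂ : S}
    (h₁ : Bisimilar (Tr c) ζ₁ ζ₂) (h₂ : Bisimilar (Tr c) ξ₁ ξ₂) :
    Bisimilar (Tr c) (𝒜.comb p ζ₁ ξ₁) (𝒜.comb p ζ₂ ξ₂) := by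

  rcases eq_or_lt_of_le hp0 with h0 | h0
  · subst h0; rw [𝒜.comb_zero, 𝒜.comb_zero]; exact h₂
  rcases eq_or_lt_of_le hp1 with h1 | h1
  · rw [h1, 𝒜.comb_one, 𝒜.comb_one]; exact h₁
  set T := Tr c
  refine ⟨fun u v => ∃ x₁ y₁ x₂ y₂, Bisimilar T x₁ y₁ ∧ Bisimilar T x₂ y₂ ∧
      u = 𝒜.comb p x₁ x₂ ∧ v = 𝒜.comb p y₁ y₂, ?_, ζ₁, ζ₂, ξ₁, ξ₂, h₁, h₂, rfl, rfl⟩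
  rintro u v ⟨x₁, y₁, x₂, y₂, hb₁, hb₂, rfl, rfl⟩ a
  constructor
  · intro z hz
    obtain ⟨z₁, z₂, hz₁, hz₂, rfl⟩ := (tr_comb hhom h0 h1 x₁ x₂ a z).1 hz
    obtain ⟨w₁, hw₁, hbw₁⟩ := (bisim_isBisim x₁ y₁ hb₁ a).1 z₁ hz₁
    obtain ⟨w₂, hw₂, hbw₂⟩ := (bisim_isBisim x₂ y₂ hb₂ a).1 z₂ hz₂
    exact ⟨𝒜.comb p w₁ w₂, (tr_comb hhom h0 h1 y₁ y₂ a _).2 ⟨w₁, w₂, hw₁, hw₂, rfl⟩,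
      z₁, w₁, z₂, w₂, hbw₁, hbw₂, rfl, rfl⟩
  · intro z hz
    obtain ⟨z₁, z₂, hz₁, hz₂, rfl⟩ := (tr_comb hhom h0 h1 y₁ y₂ a z).1 hz
    obtain ⟨w₁, hw₁, hbw₁⟩ := (bisim_isBisim x₁ y₁ hb₁ a).2 z₁ hz₁
    obtain ⟨w₂, hw₂, hbw₂⟩ := (bisim_isBisim x₂ y₂ hb₂ a).2 z₂ hz₂
    exact ⟨𝒜.comb p w₁ w₂, (tr_comb hhom h0 h1 x₁ x₂ a _).2 ⟨w₁, w₂, hw₁, hw₂, rfl⟩,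
      w₁, z₁, w₂, z₂, hbw₁, hbw₂, rfl, rfl⟩
end

section
/- The convex hull up-to technique is compatible: for any labeled transition system on a convex algebra satisfying the decomposition property of transitions of convex combinations, and any relation R on states, cvx(b(R)) ⊆ b(cvx(R)), where b is the bisimulation functional and cvx(R) = { (p ζ₁ + (1-p) ξ₁, p ζ₂ + (1-p) ξ₂) : (ζ₁,ζ₂) ∈ R, (ξ₁,ξ₂) ∈ R, p ∈ [0,1] }. -/
variable {S L : Type*}

/-- The bisimulation functional `b` of a labeled transition system. -/
def bfun (T : S → L → S → Prop) (R : Set (S × S)) : Set (S × S) :=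
  {q | ∀ a : L,
    (∀ x', T q.1 a x' → ∃ y', T q.2 a y' ∧ (x', y') ∈ R) ∧
    (∀ y', T q.2 a y' → ∃ x', T q.1 a x' ∧ (x', y') ∈ R)}

/-- The convex-hull up-to technique:
`cvx(R) = { (p ζ₁ + (1-p) ξ₁, p ζ₂ + (1-p) ξ₂) : (ζ₁,ζ₂) ∈ R, (ξ₁,ξ₂) ∈ R, p ∈ [0,1] }`. -/
def cvxRel (𝒜 : ConvexAlg S) (R : Set (S × S)) : Set (S × S) :=
  {q | ∃ (p : ℝ) (ζ₁ ζ₂ ξ₁ ξ₂ : S), 0 ≤ p ∧ p ≤ 1 ∧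
    (ζ₁, ζ₂) ∈ R ∧ (ξ₁, ξ₂) ∈ R ∧
    q.1 = 𝒜.comb p ζ₁ ξ₁ ∧ q.2 = 𝒜.comb p ζ₂ ξ₂}

/-- The convex-hull up-to technique is compatible: for any LTS on a convex algebra
whose transitions of convex combinations decompose, `cvx(b(R)) ⊆ b(cvx(R))`. -/
theorem stmt15 (𝒜 : ConvexAlg S) (T : S → L → S → Prop)
    (hdec : ∀ p : ℝ, 0 < p → p < 1 → ∀ (x₁ x₂ : S) (a : L) (z : S),
      T (𝒜.comb p x₁ x₂) a z ↔
        ∃ y₁ y₂, T x₁ a y₁ ∧ T x₂ a y₂ ∧ z = 𝒜.comb p y₁ y₂)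
    (R : Set (S × S)) :
    cvxRel 𝒜 (bfun T R) ⊆ bfun T (cvxRel 𝒜 R) := by

  rintro ⟨u, v⟩ ⟨p, ζ₁, ζ₂, ξ₁, ξ₂, hp0, hp1, hζ, hξ, hu, hv⟩
  have hsub : R ⊆ cvxRel 𝒜 R := by
    rintro ⟨x, y⟩ hxy
    exact ⟨1, x, y, x, y, zero_le_one, le_refl 1, hxy, hxy,
      (𝒜.comb_one x x).symm, (𝒜.comb_one y y).symm⟩
  subst hu; subst hv; simp only [bfun, Set.mem_setOf_eq]
  rcases eq_or_lt_of_le hp0 with h0 | h0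
  · rw [← h0, 𝒜.comb_zero, 𝒜.comb_zero]
    intro a
    exact ⟨fun x' hx' => (hξ a).1 x' hx' |>.imp fun y' ⟨h1, h2⟩ => ⟨h1, hsub h2⟩,
      fun y' hy' => (hξ a).2 y' hy' |>.imp fun x' ⟨h1, h2⟩ => ⟨h1, hsub h2⟩⟩
  rcases eq_or_lt_of_le hp1 with h1 | h1
  · rw [h1, 𝒜.comb_one, 𝒜.comb_one]
    intro a
    exact ⟨fun x' hx' => (hζ a).1 x' hx' |>.imp fun y' ⟨ha, hb⟩ => ⟨ha, hsub hb⟩,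
      fun y' hy' => (hζ a).2 y' hy' |>.imp fun x' ⟨ha, hb⟩ => ⟨ha, hsub hb⟩⟩
  intro a
  constructor
  · intro x' hx'
    obtain ⟨y₁, y₂, hT1, hT2, rfl⟩ := (hdec p h0 h1 ζ₁ ξ₁ a x').mp hx'
    obtain ⟨z₁, hz1, hR1⟩ := (hζ a).1 y₁ hT1
    obtain ⟨z₂, hz2, hR2⟩ := (hξ a).1 y₂ hT2
    exact ⟨𝒜.comb p z₁ z₂, (hdec p h0 h1 ζ₂ ξ₂ a _).mpr ⟨z₁, z₂, hz1, hz2, rfl⟩,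
      ⟨p, y₁, z₁, y₂, z₂, hp0, hp1, hR1, hR2, rfl, rfl⟩⟩
  · intro y' hy'
    obtain ⟨y₁, y₂, hT1, hT2, rfl⟩ := (hdec p h0 h1 ζ₂ ξ₂ a y').mp hy'
    obtain ⟨z₁, hz1, hR1⟩ := (hζ a).2 y₁ hT1
    obtain ⟨z₂, hz2, hR2⟩ := (hξ a).2 y₂ hT2
    exact ⟨𝒜.comb p z₁ z₂, (hdec p h0 h1 ζ₁ ξ₁ a _).mpr ⟨z₁, z₂, hz1, hz2, rfl⟩,
      ⟨p, z₁, y₁, z₂, y₂, hp0, hp1, hR1, hR2, rfl, rfl⟩⟩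
end
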